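/- In the free product ℤ_{2m}^{*n} with length ψ(w) = ∑_k min{ℓ_k, 2m−ℓ_k} for a reduced word w = g_{i₁}^{ℓ₁}⋯g_{i_r}^{ℓ_r}, define u_w = δ_w − δ_{w⁻} where w⁻ = g_{i₁}^{ℓ₁}⋯g_{i_r}^{ℓ_r−1}. Then for any nonidentity reduced word w ending in g_{i_r}^{ℓ_r} one has ⟨u_w, u_{w g_{i_r}^m}⟩_ψ = −1; consequently ⟨u_w + u_{w g_{i_r}^m}, u_w + u_{w g_{i_r}^m}⟩_ψ = 0, i.e. u_w = −u_{w g_{i_r}^m} modulo the kernel of the Gromov form. -/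

import Mathlib

/-!
Each `u_w` has coefficient sum zero, so in `⟨u_w, u_v⟩_ψ` the terms `ψ(w)`, `ψ(v)` of the Gromov
form cancel and only `ψ(x⁻¹y)` survives, for `x`, `y` in the supports. When `w⁻¹v = g_i^k`
these `x⁻¹y` are powers of `g_i`, and `⟨u_w, u_v⟩_ψ` is minus half the second difference
`ψ(g_i^{k-1}) - 2ψ(g_i^k) + ψ(g_i^{k+1})` of the cyclic length `min(ℓ, 2m - ℓ)`: it is `1` at
`k = 0` and `-1` at the peak `k = m`. As `g_i^m = g_i^{-m}`, both mixed terms of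
`⟨u_w + u_{wg_i^m}, u_w + u_{wg_i^m}⟩_ψ` are `-1`, and the norm is `1 - 1 - 1 + 1 = 0`.
-/

open Monoid

noncomputable def psiFP (m n : ℕ)
    (w : CoprodI (fun _ : Fin n => Multiplicative (ZMod (2 * m)))) : ℕ :=
  ((CoprodI.Word.equiv w).toList.map
    (fun l => min (Multiplicative.toAdd l.2).val (2 * m - (Multiplicative.toAdd l.2).val))).sum

noncomputable def gromovFP (m n : ℕ)
    (w₁ w₂ : CoprodI (fun _ : Fin n => Multiplicative (ZMod (2 * m)))) : ℝ :=
  ((psiFP m n w₁ : ℝ) + (psiFP m n w₂ : ℝ) - (psiFP m n (w₁⁻¹ * w₂) : ℝ)) / 2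

noncomputable def gromovFormFP (m n : ℕ)
    (a b : CoprodI (fun _ : Fin n => Multiplicative (ZMod (2 * m))) →₀ ℝ) : ℝ :=
  ∑ g ∈ a.support, ∑ h ∈ b.support, a g * b h * gromovFP m n g h

/-- u_w = δ_w − δ_{w⁻}, where w⁻ = w·g_i^{-1} decreases the exponent of the last
letter (with index i) of w by one. -/
noncomputable def uFP (m n : ℕ) (i : Fin n)
    (w : CoprodI (fun _ : Fin n => Multiplicative (ZMod (2 * m)))) :
    CoprodI (fun _ : Fin n => Multiplicative (ZMod (2 * m))) →₀ ℝ :=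
  Finsupp.single w 1
    - Finsupp.single
        (w * CoprodI.of (i := i) (Multiplicative.ofAdd (-1 : ZMod (2 * m)))) 1

namespace Monoid.CoprodI.Word

variable {ι : Type*} {M : ι → Type*} [∀ i, Monoid (M i)] [∀ i, DecidableEq (M i)]
  [DecidableEq ι]

theorem equiv_one : equiv (1 : CoprodI M) = empty := by
  rw [← Equiv.eq_symm_apply]
  rfl

theorem equiv_of {i : ι} (x : M i) (hx : x ≠ 1) :
    equiv (of x) = cons x empty (by simp [fstIdx]) hx := by
  rw [← Equiv.eq_symm_apply]
  simp [equiv]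

end Monoid.CoprodI.Word

section

variable {m n : ℕ}

local notation "𝔾" => CoprodI (fun _ : Fin n => Multiplicative (ZMod (2 * m)))

local notation:max "g[" i "]^" c:max => CoprodI.of (i := i) (Multiplicative.ofAdd c)

theorem psiFP_one : psiFP m n 1 = 0 := by
  simp [psiFP, CoprodI.Word.equiv_one]

theorem psiFP_of (i : Fin n) (c : ZMod (2 * m)) :
    psiFP m n g[i]^c = min c.val (2 * m - c.val) := by
  rcases eq_or_ne c 0 with rfl | hc
  · simp [psiFP_one]
  · rw [psiFP, CoprodI.Word.equiv_of _ (by simpa using hc)]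
    simp

theorem psiFP_of_natCast (i : Fin n) {k : ℕ} (hk : k ≤ 2 * m) :
    psiFP m n g[i]^(k : ZMod (2 * m)) = min k (2 * m - k) := by
  rcases hk.lt_or_eq with hk | rfl
  · rw [psiFP_of, ZMod.val_natCast, Nat.mod_eq_of_lt hk]
  · simp [psiFP_one]

theorem gromovFormFP_eq_sum (a b : 𝔾 →₀ ℝ) :
    gromovFormFP m n a b = a.sum fun g x => b.sum fun h y => x * y * gromovFP m n g h :=
  rfl

theorem gromovFormFP_add_left (a a' b : 𝔾 →₀ ℝ) :
    gromovFormFP m n (a + a') b = gromovFormFP m n a b + gromovFormFP m n a' b := by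
  simp only [gromovFormFP_eq_sum]
  refine Finsupp.sum_add_index' (fun _ => by simp) fun _ _ _ => ?_
  simp only [add_mul, Finsupp.sum_add]

theorem gromovFormFP_add_right (a b b' : 𝔾 →₀ ℝ) :
    gromovFormFP m n a (b + b') = gromovFormFP m n a b + gromovFormFP m n a b' := by
  simp only [gromovFormFP_eq_sum, ← Finsupp.sum_add]
  congr! 3 with g x
  exact Finsupp.sum_add_index' (fun _ => by simp) fun _ _ _ => by ring

theorem gromovFormFP_single_single (g h : 𝔾) (c d : ℝ) :
    gromovFormFP m n (Finsupp.single g c) (Finsupp.single h d) = c * d * gromovFP m n g h := by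
  simp [gromovFormFP_eq_sum]

theorem uFP_eq_add (i : Fin n) (w : 𝔾) :
    uFP m n i w = Finsupp.single w 1 + Finsupp.single (w * g[i]^(-1)) (-1) := by
  rw [uFP, sub_eq_add_neg, Finsupp.single_neg]

theorem gromovFormFP_uFP_uFP (i : Fin n) (w v : 𝔾) :
    gromovFormFP m n (uFP m n i w) (uFP m n i v) =
      ((psiFP m n (w⁻¹ * v * g[i]^(-1)) : ℝ) + psiFP m n ((g[i]^(-1))⁻¹ * (w⁻¹ * v))
        - psiFP m n (w⁻¹ * v) - psiFP m n ((g[i]^(-1))⁻¹ * (w⁻¹ * v) * g[i]^(-1))) / 2 := by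
  simp only [uFP_eq_add, gromovFormFP_add_left, gromovFormFP_add_right,
    gromovFormFP_single_single, gromovFP, mul_inv_rev, mul_assoc]
  ring

theorem gromovFormFP_uFP_uFP_of_inv_mul_eq (i : Fin n) {w v : 𝔾} {k : ZMod (2 * m)}
    (h : w⁻¹ * v = g[i]^k) :
    gromovFormFP m n (uFP m n i w) (uFP m n i v) =
      ((psiFP m n g[i]^(k - 1) : ℝ) + psiFP m n g[i]^(k + 1)) / 2 - psiFP m n g[i]^k := by
  have hmul : ∀ a b : ZMod (2 * m), (g[i]^a * g[i]^b : 𝔾) = g[i]^(a + b) := fun a b => by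
    rw [← map_mul, ← ofAdd_add]
  have hinv : ((g[i]^(-1 : ZMod (2 * m)))⁻¹ : 𝔾) = g[i]^(1 : ZMod (2 * m)) := by
    rw [← map_inv, ← ofAdd_neg, neg_neg]
  rw [gromovFormFP_uFP_uFP, h, hinv, hmul, hmul, hmul, ← sub_eq_add_neg, add_comm (1 : ZMod _),
    add_neg_cancel_right]
  ring

theorem gromovFormFP_uFP_self (hm : 0 < m) (i : Fin n) (w : 𝔾) :
    gromovFormFP m n (uFP m n i w) (uFP m n i w) = 1 := by
  have h_pred : psiFP m n g[i]^(0 - 1 : ZMod (2 * m)) = 1 := by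
    have h_cast : (0 - 1 : ZMod (2 * m)) = ((2 * m - 1 : ℕ) : ZMod (2 * m)) := by
      rw [Nat.cast_sub (by omega), ZMod.natCast_self, Nat.cast_one]
    rw [h_cast, psiFP_of_natCast i (by omega)]
    omega
  have h_succ : psiFP m n g[i]^(0 + 1 : ZMod (2 * m)) = 1 := by
    rw [zero_add, ← Nat.cast_one (R := ZMod (2 * m)), psiFP_of_natCast i (by omega)]
    omega
  have h_zero : psiFP m n g[i]^(0 : ZMod (2 * m)) = 0 := by
    rw [ofAdd_zero, map_one, psiFP_one]
  rw [gromovFormFP_uFP_uFP_of_inv_mul_eq i (k := 0) (by rw [inv_mul_cancel, ofAdd_zero, map_one]),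
    h_pred, h_succ, h_zero]
  norm_num

theorem gromovFormFP_uFP_uFP_of_inv_mul_eq_half (hm : 0 < m) (i : Fin n) {w v : 𝔾}
    (h : w⁻¹ * v = g[i]^(m : ZMod (2 * m))) :
    gromovFormFP m n (uFP m n i w) (uFP m n i v) = -1 := by
  have h_pred : psiFP m n g[i]^((m : ZMod (2 * m)) - 1) = m - 1 := by
    rw [← Nat.cast_one (R := ZMod (2 * m)), ← Nat.cast_sub hm, psiFP_of_natCast i (by omega)]
    omega
  have h_succ : psiFP m n g[i]^((m : ZMod (2 * m)) + 1) = m - 1 := by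
    rw [← Nat.cast_succ, psiFP_of_natCast i (by omega)]
    omega
  have h_half : psiFP m n g[i]^(m : ZMod (2 * m)) = m := by
    rw [psiFP_of_natCast i (by omega)]
    omega
  rw [gromovFormFP_uFP_uFP_of_inv_mul_eq i h, h_pred, h_succ, h_half, Nat.cast_sub hm]
  ring

end

theorem uFP_last_letter_relation_general (m n : ℕ) (hm : 0 < m) (i : Fin n)
    (w : CoprodI (fun _ : Fin n => Multiplicative (ZMod (2 * m)))) :
    gromovFormFP m n (uFP m n i w)
        (uFP m n i (w * CoprodI.of (i := i) (Multiplicative.ofAdd ((m : ZMod (2 * m))))))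
      = -1 ∧
    gromovFormFP m n
        (uFP m n i w
          + uFP m n i (w * CoprodI.of (i := i) (Multiplicative.ofAdd ((m : ZMod (2 * m))))))
        (uFP m n i w
          + uFP m n i (w * CoprodI.of (i := i) (Multiplicative.ofAdd ((m : ZMod (2 * m))))))
      = 0 := by
  have h_neg_half : -(m : ZMod (2 * m)) = m :=
    neg_eq_of_add_eq_zero_left (by rw [← Nat.cast_add, ← two_mul, ZMod.natCast_self])
  have h_forward := gromovFormFP_uFP_uFP_of_inv_mul_eq_half hm i (inv_mul_cancel_left w _)
  have h_backward := gromovFormFP_uFP_uFP_of_inv_mul_eq_half hm i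
    (w := w * CoprodI.of (i := i) (Multiplicative.ofAdd (m : ZMod (2 * m)))) (v := w) (by
      rw [mul_inv_rev, inv_mul_cancel_right, ← map_inv, ← ofAdd_neg, h_neg_half])
  refine ⟨h_forward, ?_⟩
  rw [gromovFormFP_add_left, gromovFormFP_add_right, gromovFormFP_add_right,
    gromovFormFP_uFP_self hm, gromovFormFP_uFP_self hm, h_forward, h_backward]
  norm_num

/-- in ℤ_{2m}^{*n}, for a nonidentity reduced word w ending with a
letter of index i, one has ⟨u_w, u_{w·g_i^m}⟩_ψ = −1, and consequently
u_w + u_{w·g_i^m} has zero Gromov norm, i.e. u_w = −u_{w·g_i^m} mod the kernel. -/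
theorem uFP_last_letter_relation (m n : ℕ) (hm : 0 < m) (i : Fin n)
    (w : CoprodI (fun _ : Fin n => Multiplicative (ZMod (2 * m))))
    (hw : w ≠ 1)
    (hlast : ((CoprodI.Word.equiv w).toList.getLast?).map Sigma.fst = some i) :
    gromovFormFP m n (uFP m n i w)
        (uFP m n i (w * CoprodI.of (i := i) (Multiplicative.ofAdd ((m : ZMod (2 * m))))))
      = -1 ∧
    gromovFormFP m n
        (uFP m n i w
          + uFP m n i (w * CoprodI.of (i := i) (Multiplicative.ofAdd ((m : ZMod (2 * m))))))
        (uFP m n i w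
          + uFP m n i (w * CoprodI.of (i := i) (Multiplicative.ofAdd ((m : ZMod (2 * m))))))
      = 0 :=
  uFP_last_letter_relation_general m n hm i w
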